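/- Let G be symmetric positive semidefinite, b ∈ ℝ^K, μ > 0, L(x) = (1/2)xᵀGx - bᵀx + μ‖x‖₁, and suppose d := x̂ - x satisfies (Gx - b)ᵀd + μ(‖x̂‖₁ - ‖x‖₁) ≤ -c‖d‖₂² for some c > 0 (descent condition from the best response). Let λ̄ ≥ λ_max(G). Then for γ = min(c/λ̄, 1) one has L(x + γd) - L(x) ≤ -η‖d‖₂² where η = min(c²/(2λ̄), c/2) > 0. -/

import Mathlib

/-!
Since `‖·‖₁` is convex, for `γ ∈ [0, 1]` the step `x ↦ x + γ d` changes the objective by at most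
`γ²/2 · dᵀGd + γ [(Gx - b)ᵀd + μ(‖x̂‖₁ - ‖x‖₁)]`. Bounding `dᵀGd ≤ λ̄‖d‖²` and using the descent
condition, the change is at most `(λ̄γ²/2 - cγ)‖d‖²`, and at `γ = min (c/λ̄) 1` the coefficient is
at most `-min (c²/(2λ̄)) (c/2)`.
-/

open Matrix
open scoped MatrixOrder

namespace Matrix

theorem IsHermitian.dotProduct_mulVec_le {n : Type*} [Fintype n] [DecidableEq n]
    {A : Matrix n n ℝ} (hA : A.IsHermitian) {lam : ℝ} (hlam : ∀ i, hA.eigenvalues i ≤ lam)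
    (v : n → ℝ) : v ⬝ᵥ A *ᵥ v ≤ lam * (v ⬝ᵥ v) := by
  have hle : A ≤ algebraMap ℝ (Matrix n n ℝ) lam := by
    refine le_algebraMap_of_spectrum_le (fun r hr => ?_) hA.isSelfAdjoint
    rw [hA.spectrum_real_eq_range_eigenvalues] at hr
    obtain ⟨i, rfl⟩ := hr
    exact hlam i
  simpa [sub_mulVec, Algebra.algebraMap_eq_smul_one, smul_mulVec, dotProduct_sub] using
    (le_iff.mp hle).dotProduct_mulVec_nonneg v

theorem IsSymm.dotProduct_mulVec_add_smul {α n : Type*} [CommRing α] [Fintype n]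
    {A : Matrix n n α} (hA : A.IsSymm) (x d : n → α) (t : α) :
    (x + t • d) ⬝ᵥ A *ᵥ (x + t • d)
      = x ⬝ᵥ A *ᵥ x + 2 * t * (d ⬝ᵥ A *ᵥ x) + t ^ 2 * (d ⬝ᵥ A *ᵥ d) := by
  have hcomm : x ⬝ᵥ A *ᵥ d = d ⬝ᵥ A *ᵥ x := by
    simpa [hA.eq] using (dotProduct_transpose_mulVec A d x).symm
  simp only [mulVec_add, mulVec_smul, dotProduct_add, add_dotProduct, dotProduct_smul,
    smul_dotProduct, smul_eq_mul, hcomm]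
  ring

end Matrix

theorem sum_abs_add_smul_sub_le {n : Type*} [Fintype n] (x y : n → ℝ) {t : ℝ}
    (ht₀ : 0 ≤ t) (ht₁ : t ≤ 1) :
    ∑ i, |(x + t • (y - x)) i| ≤ (1 - t) * ∑ i, |x i| + t * ∑ i, |y i| := by
  rw [Finset.mul_sum, Finset.mul_sum, ← Finset.sum_add_distrib]
  refine Finset.sum_le_sum fun i _ => ?_
  calc |(x + t • (y - x)) i| = |(1 - t) * x i + t * y i| := by
        simp only [Pi.add_apply, Pi.smul_apply, Pi.sub_apply, smul_eq_mul]; ring_nf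
    _ ≤ |(1 - t) * x i| + |t * y i| := abs_add_le _ _
    _ = (1 - t) * |x i| + t * |y i| := by
        rw [abs_mul, abs_mul, abs_of_nonneg (sub_nonneg.mpr ht₁), abs_of_nonneg ht₀]

noncomputable def lassoObjective {n : Type*} [Fintype n] (G : Matrix n n ℝ) (b : n → ℝ) (μ : ℝ)
    (x : n → ℝ) : ℝ :=
  (1 / 2) * (x ⬝ᵥ G *ᵥ x) - b ⬝ᵥ x + μ * ∑ i, |x i|

theorem lassoObjective_add_smul_sub_le {n : Type*} [Fintype n] {G : Matrix n n ℝ}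
    (hG : G.IsSymm) (b x y : n → ℝ) {μ γ : ℝ} (hμ : 0 ≤ μ) (hγ₀ : 0 ≤ γ) (hγ₁ : γ ≤ 1) :
    lassoObjective G b μ (x + γ • (y - x)) - lassoObjective G b μ x
      ≤ γ ^ 2 / 2 * ((y - x) ⬝ᵥ G *ᵥ (y - x))
        + γ * ((G *ᵥ x - b) ⬝ᵥ (y - x) + μ * (∑ i, |y i| - ∑ i, |x i|)) := by
  have habs := mul_le_mul_of_nonneg_left (sum_abs_add_smul_sub_le x y hγ₀ hγ₁) hμ
  have hlin : (G *ᵥ x - b) ⬝ᵥ (y - x) = (y - x) ⬝ᵥ G *ᵥ x - b ⬝ᵥ (y - x) := by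
    rw [sub_dotProduct, dotProduct_comm]
  simp only [lassoObjective, hG.dotProduct_mulVec_add_smul, hlin, dotProduct_add,
    dotProduct_smul, smul_eq_mul]
  linarith

theorem min_div_one_sq_mul_half_sub_le {c lam : ℝ} (hc : 0 < c) (hlam : 0 < lam) :
    min (c / lam) 1 ^ 2 / 2 * lam - min (c / lam) 1 * c ≤ -min (c ^ 2 / (2 * lam)) (c / 2) := by
  rcases le_total c lam with hcl | hlc
  · rw [min_eq_left ((div_le_one hlam).mpr hcl)]
    have : (c / lam) ^ 2 / 2 * lam - c / lam * c = -(c ^ 2 / (2 * lam)) := by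
      field_simp; ring
    rw [this, neg_le_neg_iff]
    exact min_le_left _ _
  · rw [min_eq_right ((one_le_div hlam).mpr hlc)]
    linarith [min_le_right (c ^ 2 / (2 * lam)) (c / 2)]

theorem stmt_17 (K : ℕ) (hK : 0 < K) (G : Matrix (Fin K) (Fin K) ℝ) (hG : G.PosSemidef)
    (b x xh : Fin K → ℝ) (μ c lam : ℝ) (hμ : 0 < μ) (hc : 0 < c) (hlam0 : 0 < lam)
    (hlam : Finset.univ.sup' (Finset.univ_nonempty_iff.mpr ⟨⟨0, hK⟩⟩) hG.1.eigenvalues ≤ lam)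
    (hdesc : ((G.mulVec x - b) ⬝ᵥ (xh - x)) + μ * ((∑ i, |xh i|) - ∑ i, |x i|)
        ≤ -c * ∑ i, (xh i - x i)^2) :
    let γ := min (c / lam) 1
    let η := min (c^2 / (2 * lam)) (c / 2)
    0 < η ∧
    ((1/2) * ((x + γ • (xh - x)) ⬝ᵥ G.mulVec (x + γ • (xh - x)))
        - b ⬝ᵥ (x + γ • (xh - x)) + μ * ∑ i, |(x + γ • (xh - x)) i|)
      - ((1/2) * (x ⬝ᵥ G.mulVec x) - b ⬝ᵥ x + μ * ∑ i, |x i|)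
    ≤ -η * ∑ i, (xh i - x i)^2 := by
  intro γ η
  refine ⟨lt_min (by positivity) (by positivity), ?_⟩
  have hγ₀ : 0 ≤ γ := le_min (by positivity) zero_le_one
  have hnorm : (xh - x) ⬝ᵥ (xh - x) = ∑ i, (xh i - x i) ^ 2 := by
    simp [dotProduct, sq]
  have hquad : (xh - x) ⬝ᵥ G *ᵥ (xh - x) ≤ lam * ∑ i, (xh i - x i) ^ 2 :=
    hnorm ▸ hG.1.dotProduct_mulVec_le (fun i => (Finset.sup'_le_iff _ _).mp hlam i
      (Finset.mem_univ i)) (xh - x)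
  calc lassoObjective G b μ (x + γ • (xh - x)) - lassoObjective G b μ x
      ≤ γ ^ 2 / 2 * ((xh - x) ⬝ᵥ G *ᵥ (xh - x))
        + γ * ((G *ᵥ x - b) ⬝ᵥ (xh - x) + μ * (∑ i, |xh i| - ∑ i, |x i|)) :=
        lassoObjective_add_smul_sub_le (isHermitian_iff_isSymm.mp hG.1) b x xh hμ.le hγ₀
          (min_le_right _ _)
    _ ≤ γ ^ 2 / 2 * (lam * ∑ i, (xh i - x i) ^ 2) + γ * (-c * ∑ i, (xh i - x i) ^ 2) := by
        gcongr
    _ = (γ ^ 2 / 2 * lam - γ * c) * ∑ i, (xh i - x i) ^ 2 := by ring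
    _ ≤ -η * ∑ i, (xh i - x i) ^ 2 :=
        mul_le_mul_of_nonneg_right (min_div_one_sq_mul_half_sub_le hc hlam0)
          (Finset.sum_nonneg fun i _ => sq_nonneg _)
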